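/- Let T be (A,(m,n))-isosymmetric and p ≥ m. Then for every i ∈ {0, 1, ..., p−m}, Σ_{k=0}^p (-1)^{p−k} binom(p,k) k^i (T*)^k S_A^n(T) T^k = 0. -/

import Mathlib

open ContinuousLinearMap

noncomputable def SOp {H : Type*} [NormedAddCommGroup H] [InnerProductSpace ℂ H]
    [CompleteSpace H] (A T : H →L[ℂ] H) (n : ℕ) : H →L[ℂ] H :=
  ∑ k ∈ Finset.range (n + 1),
    ((-1 : ℂ) ^ (n - k) * (n.choose k : ℂ)) • (((adjoint T) ^ k) ∘L A ∘L (T ^ (n - k)))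

noncomputable def OmegaS {H : Type*} [NormedAddCommGroup H] [InnerProductSpace ℂ H]
    [CompleteSpace H] (A T : H →L[ℂ] H) (m n : ℕ) : H →L[ℂ] H :=
  ∑ k ∈ Finset.range (m + 1),
    ((-1 : ℂ) ^ (m - k) * (m.choose k : ℂ)) • (((adjoint T) ^ k) ∘L SOp A T n ∘L (T ^ k))

open Finset fwdDiff

section

variable {M G G' : Type*} [AddCommMonoid M] [AddCommGroup G] [AddCommGroup G']

theorem map_fwdDiff_iter (φ : G →+ G') (h : M) (f : M → G) (n : ℕ) (y : M) :
    φ ((Δ_[h])^[n] f y) = (Δ_[h])^[n] (φ ∘ f) y := by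
  simp [fwdDiff_iter_eq_sum_shift, map_sum, map_zsmul]

theorem fwdDiff_iter_eq_zero_of_le {h : M} {f : M → G} {m p : ℕ} (hf : (Δ_[h])^[m] f = 0)
    (hmp : m ≤ p) : (Δ_[h])^[p] f = 0 := by
  obtain ⟨d, rfl⟩ := Nat.exists_eq_add_of_le hmp
  rw [add_comm, Function.iterate_add_apply, hf]
  exact Function.iterate_fixed (fwdDiff_const h 0) d

end

section

variable {G : Type*} [AddCommGroup G] (R : Type*) [Ring R] [Module R G]

theorem fwdDiff_iter_eq_sum_smul (f : ℕ → G) (n y : ℕ) :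
    (Δ_[1])^[n] f y
      = ∑ k ∈ range (n + 1), ((-1 : R) ^ (n - k) * n.choose k) • f (y + k) := by
  rw [fwdDiff_iter_eq_sum_shift]
  refine sum_congr rfl fun k _ => ?_
  rw [← Int.cast_smul_eq_zsmul R]
  simp

theorem fwdDiff_natCast_smul (f : ℕ → G) :
    Δ_[1] (fun k : ℕ => (k : R) • f k)
      = (fun k : ℕ => (k : R) • Δ_[1] f k) + fun k : ℕ => f (k + 1) := by
  ext k
  simp only [fwdDiff, Pi.add_apply, Nat.cast_add, Nat.cast_one, add_smul, one_smul, smul_sub]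
  abel

variable {R}

theorem fwdDiff_iter_succ_natCast_smul_eq_zero {f : ℕ → G} {m : ℕ} (hf : (Δ_[1])^[m] f = 0) :
    (Δ_[1])^[m + 1] (fun k : ℕ => (k : R) • f k) = 0 := by
  induction m generalizing f with
  | zero =>
    obtain rfl : f = 0 := hf
    funext y
    simp [fwdDiff]
  | succ m ih =>
    have hΔf : (Δ_[1])^[m] (Δ_[1] f) = 0 := by rwa [← Function.iterate_succ_apply]
    have hshift : (Δ_[1])^[m + 1] (fun k : ℕ => f (k + 1)) = 0 := funext fun y => by
      rw [fwdDiff_iter_comp_add, hf]; rfl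
    rw [Function.iterate_succ_apply, fwdDiff_natCast_smul, fwdDiff_iter_add, ih hΔf, hshift,
      add_zero]

theorem fwdDiff_iter_pow_smul_eq_zero {f : ℕ → G} {m i p : ℕ} (hf : (Δ_[1])^[m] f = 0)
    (hp : m + i ≤ p) : (Δ_[1])^[p] (fun k : ℕ => (k : R) ^ i • f k) = 0 := by
  refine fwdDiff_iter_eq_zero_of_le ?_ hp
  clear hp
  induction i with
  | zero => simpa using hf
  | succ i ih =>
    simp only [pow_succ', mul_smul]
    exact fwdDiff_iter_succ_natCast_smul_eq_zero ih

end

theorem fwdDiff_iter_pow_mul_mul_pow_apply {R : Type*} [Ring R] (a X b : R) (m j : ℕ) :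
    (Δ_[1])^[m] (fun k : ℕ => a ^ k * (X * b ^ k)) j
      = a ^ j * ((Δ_[1])^[m] (fun k : ℕ => a ^ k * (X * b ^ k)) 0 * b ^ j) := by
  let conj : R →+ R := (AddMonoidHom.mulLeft (a ^ j)).comp (AddMonoidHom.mulRight (b ^ j))
  have hconj : (fun k : ℕ => a ^ (k + j) * (X * b ^ (k + j)))
      = conj ∘ fun k : ℕ => a ^ k * (X * b ^ k) := by
    ext k
    simp [conj, pow_add, ← pow_mul_comm a, mul_assoc]
  rw [← zero_add j, ← fwdDiff_iter_comp_add, zero_add, hconj, ← map_fwdDiff_iter]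
  rfl

theorem weighted_difference_vanish_general {H : Type*} [NormedAddCommGroup H] [InnerProductSpace ℂ H]
    [CompleteSpace H] (A T : H →L[ℂ] H) (m n : ℕ)
    (h : OmegaS A T m n = 0) (p : ℕ) (hp : m ≤ p) :
    ∀ i ≤ p - m,
      ∑ k ∈ Finset.range (p + 1),
        ((-1 : ℂ) ^ (p - k) * (p.choose k : ℂ) * (k : ℂ) ^ i) •
          (((adjoint T) ^ k) ∘L SOp A T n ∘L (T ^ k)) = 0 := by
  intro i hi
  set g : ℕ → H →L[ℂ] H := fun k : ℕ => adjoint T ^ k * (SOp A T n * T ^ k) with hg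
  have hΔg0 : (Δ_[1])^[m] g 0 = 0 := by
    rw [fwdDiff_iter_eq_sum_smul ℂ]
    simpa [OmegaS, g, ContinuousLinearMap.mul_def] using h
  have hΔg : (Δ_[1])^[m] g = 0 := funext fun j => by
    rw [hg, fwdDiff_iter_pow_mul_mul_pow_apply, ← hg, hΔg0, zero_mul, mul_zero, Pi.zero_apply]
  have key := fwdDiff_iter_pow_smul_eq_zero (R := ℂ) (i := i) hΔg (by omega : m + i ≤ p)
  have key0 := congrFun key 0
  rw [fwdDiff_iter_eq_sum_smul ℂ] at key0
  simpa [g, mul_smul, ContinuousLinearMap.mul_def] using key0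

theorem weighted_difference_vanish {H : Type*} [NormedAddCommGroup H] [InnerProductSpace ℂ H]
    [CompleteSpace H] (A T : H →L[ℂ] H) (hA : A.IsPositive) (m n : ℕ)
    (h : OmegaS A T m n = 0) (p : ℕ) (hp : m ≤ p) :
    ∀ i ≤ p - m,
      ∑ k ∈ Finset.range (p + 1),
        ((-1 : ℂ) ^ (p - k) * (p.choose k : ℂ) * (k : ℂ) ^ i) •
          (((adjoint T) ^ k) ∘L SOp A T n ∘L (T ^ k)) = 0 :=
  weighted_difference_vanish_general A T m n h p hp
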